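/- For every n ∈ ℕ₀ and every pair of distinct candidates i, j ∈ [2^{n+3}] with i ▷ j in η_n, at least 2n+6 of the 4n+10 rows of the voting profile R_n rank i before j (so the winning margin in every pairwise challenge under R_n is at least 2). -/

import Mathlib

/-- The arrows of the tournament `η₀` on `{1,…,8}`. -/
def eta0Pairs : List (ℕ × ℕ) :=
  [(1,2),(1,3),(1,5),(2,3),(2,4),(2,6),(2,7),
   (3,4),(3,5),(3,6),(3,8),(4,1),(4,5),(4,8),
   (5,2),(5,6),(5,7),(6,1),(6,4),(6,7),(6,8),
   (7,1),(7,3),(7,4),(7,8),(8,1),(8,2),(8,5)]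

/-- The tournament `η₀` on `{1,…,8}`: `eta0 i j = true` iff `i ▷ j`. -/
def eta0 (i j : ℕ) : Bool := decide ((i, j) ∈ eta0Pairs)

/-- The recursively defined tournaments: `eta n` is the tournament `η_n` on
`{1,…,2^(n+3)}`, `eta n i j = true` meaning `i ▷ j`. -/
def eta : ℕ → ℕ → ℕ → Bool
  | 0, i, j => eta0 i j
  | n+1, i, j =>
    if i ≤ 2^(n+3) ∧ j ≤ 2^(n+3) then eta n i j
    else if 2^(n+3) < i ∧ 2^(n+3) < j then eta n (i - 2^(n+3)) (j - 2^(n+3))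
    else if i ≤ 2^(n+3) then decide ((i + j) % 2 = 0)
    else decide ((i + j) % 2 = 1)

/-- Number of rows (preference lists) of the voting profile `R` ranking `i` before `j`. -/
def prefCount (R : List (List ℕ)) (i j : ℕ) : ℕ :=
  (R.filter fun ρ => decide (ρ.idxOf i < ρ.idxOf j)).length

/-- `R` is a voting profile on the candidate set `{1,…,m}` generating the tournament `η`:
every row is a permutation of `{1,…,m}` and, for distinct candidates `i,j`, `i ▷ j`
holds iff strictly more rows rank `i` before `j` than rank `j` before `i`. -/
def Generates (R : List (List ℕ)) (m : ℕ) (η : ℕ → ℕ → Bool) : Prop :=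
  (∀ ρ ∈ R, ρ.Perm (List.range' 1 m)) ∧
  ∀ i ∈ List.range' 1 m, ∀ j ∈ List.range' 1 m, i ≠ j →
    (η i j = true ↔ prefCount R j i < prefCount R i j)

/-- Stearns' ten-row voting profile `R₀` on `{1,…,8}`. -/
def R0 : List (List ℕ) :=
  [[8,1,5,2,3,4,6,7],[2,7,6,4,1,3,5,8],[2,7,3,6,4,5,8,1],[4,1,3,8,5,6,7,2],
   [3,5,2,6,7,1,4,8],[6,8,4,1,5,7,2,3],[6,7,3,4,8,1,2,5],[8,5,2,7,1,4,3,6],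
   [7,8,5,6,3,4,1,2],[1,2,3,4,5,6,7,8]]

/-- The increasing list of the odd elements of `{1,…,2^(n+2)}`. -/
def Aodd (n : ℕ) : List ℕ := (List.range (2^(n+1))).map fun t => 2*t+1

/-- The increasing list of the even elements of `{1,…,2^(n+2)}`. -/
def Aeven (n : ℕ) : List ℕ := (List.range (2^(n+1))).map fun t => 2*t+2

/-- The increasing list of the odd elements of `{2^(n+2)+1,…,2^(n+3)}`. -/
def Bodd (n : ℕ) : List ℕ := (Aodd n).map (· + 2^(n+2))

/-- The increasing list of the even elements of `{2^(n+2)+1,…,2^(n+3)}`. -/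
def Beven (n : ℕ) : List ℕ := (Aeven n).map (· + 2^(n+2))

/-- The preference list `v₁ = (A₁, B₁, A₂, B₂)` on `{1,…,2^(n+3)}`. -/
def v1 (n : ℕ) : List ℕ := Aodd n ++ Bodd n ++ Aeven n ++ Beven n

/-- The preference list `v₂ = (Ā₂, B̄₂, Ā₁, B̄₁)` on `{1,…,2^(n+3)}`. -/
def v2 (n : ℕ) : List ℕ :=
  (Aeven n).reverse ++ (Beven n).reverse ++ (Aodd n).reverse ++ (Bodd n).reverse

/-- The preference list `v₃ = (B₁, A₂, B₂, A₁)` on `{1,…,2^(n+3)}`. -/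
def v3 (n : ℕ) : List ℕ := Bodd n ++ Aeven n ++ Beven n ++ Aodd n

/-- The preference list `v₄ = (B̄₂, Ā₁, B̄₁, Ā₂)` on `{1,…,2^(n+3)}`. -/
def v4 (n : ℕ) : List ℕ :=
  (Beven n).reverse ++ (Aodd n).reverse ++ (Bodd n).reverse ++ (Aeven n).reverse

/-- `bowtie P Q`: the voting profile whose `s`-th row (1-based) is the concatenation
`P_s ++ Q_s` when `s` is odd and `Q_s ++ P_s` when `s` is even. -/
def bowtie (P Q : List (List ℕ)) : List (List ℕ) :=
  (P.zip Q).zipIdx.map fun p => if p.2 % 2 = 0 then p.1.1 ++ p.1.2 else p.1.2 ++ p.1.1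

/-- The recursively constructed voting profile `R_n` on `{1,…,2^(n+3)}`:
`R_n = (v₁, v₂, v₃, v₄, R_{n-1} ⋈ (R_{n-1} + 2^(n+2)·𝟙))_V`. -/
def Rprofile : ℕ → List (List ℕ)
  | 0 => R0
  | n+1 =>
    v1 (n+1) :: v2 (n+1) :: v3 (n+1) :: v4 (n+1) ::
      bowtie (Rprofile n) ((Rprofile n).map fun ρ => ρ.map (· + 2^(n+3)))


/-!
Induction on `n`. Each of the rows `v₁, …, v₄` of `R_{n+1}` is sorted by an explicit key
(`rowKey`: the block `A₁, B₁, A₂, B₂` of a candidate, in a cyclic order, then the candidate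
itself, increasing or decreasing), so how they rank two candidates is pure arithmetic: at least
two of them put `i` before `j` when `i, j` lie in the same half of `[2^(n+4)]`, and at least
three when the halves differ and `i ▷ j`. In the remaining rows `R_n ⋈ (R_n + 2^(n+3))`, a pair
inside one half is ranked as in `R_n`, which by induction gives `2n+6` more rows, while a pair
across the halves is ranked `i` first in every other row, i.e. in `2n+5` of the `4n+10` rows.
-/

namespace List

variable {α : Type*}

theorem idxOf_lt_idxOf_iff_of_pairwise [DecidableEq α] {β : Type*} [Preorder β] {f : α → β}
    {l : List α} (hl : l.Pairwise fun a b => f a < f b) {x y : α} (hx : x ∈ l) (hy : y ∈ l) :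
    l.idxOf x < l.idxOf y ↔ f x < f y := by
  induction l with
  | nil => simp at hx
  | cons a t ih =>
    rw [pairwise_cons] at hl
    by_cases hxa : a = x <;> by_cases hya : a = y
    · subst hxa hya
      simp
    · subst hxa
      have hyt : y ∈ t := (mem_cons.1 hy).resolve_left (Ne.symm hya)
      simp [idxOf_cons_ne _ hya, hl.1 y hyt]
    · subst hya
      have hxt : x ∈ t := (mem_cons.1 hx).resolve_left (Ne.symm hxa)
      simp [idxOf_cons_ne _ hxa, (hl.1 x hxt).not_gt]
    · rw [idxOf_cons_ne _ hxa, idxOf_cons_ne _ hya, Nat.succ_lt_succ_iff]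
      exact ih hl.2 ((mem_cons.1 hx).resolve_left (Ne.symm hxa))
        ((mem_cons.1 hy).resolve_left (Ne.symm hya))

theorem idxOf_map_of_injective [DecidableEq α] {β : Type*} [DecidableEq β] {f : α → β}
    (hf : Function.Injective f) (l : List α) (a : α) : (l.map f).idxOf (f a) = l.idxOf a := by
  simp only [idxOf, findIdx_map, Function.comp_def]
  congr 1
  funext b
  simp [hf.eq_iff]

theorem idxOf_append_lt_idxOf_append_iff_of_mem [DecidableEq α] {l₁ l₂ : List α} {x y : α}
    (hx : x ∈ l₁) (hy : y ∈ l₁) :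
    (l₁ ++ l₂).idxOf x < (l₁ ++ l₂).idxOf y ↔ l₁.idxOf x < l₁.idxOf y := by
  rw [idxOf_append_of_mem hx, idxOf_append_of_mem hy]

theorem idxOf_append_lt_idxOf_append_iff_of_notMem [DecidableEq α] {l₁ l₂ : List α} {x y : α}
    (hx : x ∉ l₁) (hy : y ∉ l₁) :
    (l₁ ++ l₂).idxOf x < (l₁ ++ l₂).idxOf y ↔ l₂.idxOf x < l₂.idxOf y := by
  rw [idxOf_append_of_notMem hx, idxOf_append_of_notMem hy, Nat.add_lt_add_iff_left]

theorem idxOf_append_lt_idxOf_append [DecidableEq α] {l₁ l₂ : List α} {x y : α}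
    (hx : x ∈ l₁) (hy : y ∉ l₁) : (l₁ ++ l₂).idxOf x < (l₁ ++ l₂).idxOf y := by
  rw [idxOf_append_of_mem hx, idxOf_append_of_notMem hy]
  exact Nat.lt_add_right _ (idxOf_lt_length_of_mem hx)

theorem countP_zipIdx_fst (l : List α) (q : α → Bool) :
    l.zipIdx.countP (fun p => q p.1) = l.countP q := by
  conv_rhs => rw [← zipIdx_map_fst 0 l, countP_map]
  rfl

theorem countP_zipIdx_snd (l : List α) (q : ℕ → Bool) :
    l.zipIdx.countP (fun p => q p.2) = (range l.length).countP q := by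
  rw [range_eq_range', ← zipIdx_map_snd 0 l, countP_map]
  rfl

theorem countP_range_mod_two_eq_zero (L : ℕ) :
    (range L).countP (fun s => s % 2 = 0) = (L + 1) / 2 := by
  induction L with
  | zero => rfl
  | succ L ih =>
    rw [range_succ, countP_append, ih]
    by_cases h : L % 2 = 0 <;> simp [h] <;> omega

theorem countP_range_mod_two_eq_one (L : ℕ) :
    (range L).countP (fun s => s % 2 = 1) = L / 2 := by
  induction L with
  | zero => rfl
  | succ L ih =>
    rw [range_succ, countP_append, ih]
    by_cases h : L % 2 = 1 <;> simp [h] <;> omega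

theorem pairwise_range_of_lt {r : ℕ → ℕ → Prop} {M : ℕ}
    (h : ∀ a b, a < b → b < M → r a b) : (range M).Pairwise r :=
  pairwise_lt_range.imp_of_mem fun _ hb hab => h _ _ hab (mem_range.1 hb)

theorem mem_map_add_right_iff {l : List ℕ} {h x : ℕ} :
    x ∈ l.map (· + h) ↔ h ≤ x ∧ x - h ∈ l := by
  constructor
  · rw [mem_map]
    rintro ⟨y, hy, rfl⟩
    simpa using hy
  · rintro ⟨hx, hl⟩
    exact mem_map.2 ⟨x - h, hl, by omega⟩

theorem mem_map_range_two_mul_add {M c x : ℕ} :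
    x ∈ (range M).map (fun t => 2 * t + c) ↔ c ≤ x ∧ x % 2 = c % 2 ∧ x < 2 * M + c := by
  simp only [mem_map, mem_range]
  constructor
  · rintro ⟨t, ht, rfl⟩
    omega
  · rintro ⟨h₁, h₂, h₃⟩
    exact ⟨(x - c) / 2, by omega, by omega⟩

end List

open List

theorem prefCount_append (R S : List (List ℕ)) (i j : ℕ) :
    prefCount (R ++ S) i j = prefCount R i j + prefCount S i j := by
  simp only [prefCount, filter_append, length_append]

theorem prefCount_map {β : Type*} (L : List β) (F : β → List ℕ) (i j : ℕ) :
    prefCount (L.map F) i j = L.countP fun b => (F b).idxOf i < (F b).idxOf j := by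
  rw [prefCount, ← countP_eq_length_filter, countP_map]
  rfl

section FirstRows

def vRows (n : ℕ) : List (List ℕ) := [v1 n, v2 n, v3 n, v4 n]

/-- The block of `x`, numbered `A₁ = 0`, `B₁ = 1`, `A₂ = 2`, `B₂ = 3`. -/
def candClass (n x : ℕ) : ℕ :=
  (if x % 2 = 1 then 0 else 2) + (if x ≤ 2 ^ (n + 2) then 0 else 1)

/-- The sort key of a row listing the blocks in the cyclic order starting with block `(4 - s) % 4`,
each block increasing, or decreasing when `rev`. -/
def rowKey (n s : ℕ) (rev : Bool) (x : ℕ) : ℕ :=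
  2 ^ (n + 3) * ((candClass n x + s) % 4) + (if rev then 2 ^ (n + 3) - x else x)

theorem mem_of_mem_vRows {n : ℕ} {ρ : List ℕ} (hρ : ρ ∈ vRows n) (x : ℕ) :
    x ∈ ρ ↔ 1 ≤ x ∧ x ≤ 2 ^ (n + 3) := by
  have h₃ : 2 ^ (n + 3) = 2 * 2 ^ (n + 2) := by ring
  have h₂ : 2 ^ (n + 2) = 2 * 2 ^ (n + 1) := by ring
  simp only [vRows, mem_cons, not_mem_nil, or_false] at hρ
  rcases hρ with rfl | rfl | rfl | rfl <;>
  · simp only [v1, v2, v3, v4, Aodd, Aeven, Bodd, Beven, mem_append, mem_reverse,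
      mem_map_add_right_iff, mem_map_range_two_mul_add]
    omega

theorem pairwise_rowKey_vRows (n : ℕ) :
    (v1 n).Pairwise (rowKey n 0 false · < rowKey n 0 false ·) ∧
    (v2 n).Pairwise (rowKey n 2 true · < rowKey n 2 true ·) ∧
    (v3 n).Pairwise (rowKey n 3 false · < rowKey n 3 false ·) ∧
    (v4 n).Pairwise (rowKey n 1 true · < rowKey n 1 true ·) := by
  have h₃ : 2 ^ (n + 3) = 2 * 2 ^ (n + 2) := by ring
  have h₂ : 2 ^ (n + 2) = 2 * 2 ^ (n + 1) := by ring
  refine ⟨?_, ?_, ?_, ?_⟩ <;>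
  · simp only [v1, v2, v3, v4, Aodd, Bodd, Aeven, Beven, map_map, pairwise_append, mem_append,
      pairwise_reverse, mem_reverse, mem_map, mem_range, pairwise_map, Function.comp_apply,
      forall_exists_index, and_imp, or_imp, forall_apply_eq_imp_iff₂, forall_and]
    and_intros <;> try apply pairwise_range_of_lt
    all_goals
      intros
      simp only [rowKey, candClass, Bool.false_eq_true, ↓reduceIte]
      split_ifs <;> omega

theorem prefCount_vRows {n i j : ℕ} (hi : 1 ≤ i ∧ i ≤ 2 ^ (n + 3))
    (hj : 1 ≤ j ∧ j ≤ 2 ^ (n + 3)) :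
    prefCount (vRows n) i j =
      (if rowKey n 0 false i < rowKey n 0 false j then 1 else 0) +
      (if rowKey n 2 true i < rowKey n 2 true j then 1 else 0) +
      (if rowKey n 3 false i < rowKey n 3 false j then 1 else 0) +
      (if rowKey n 1 true i < rowKey n 1 true j then 1 else 0) := by
  obtain ⟨h₁, h₂, h₃, h₄⟩ := pairwise_rowKey_vRows n
  have mem {ρ} (hρ : ρ ∈ vRows n) {x} (hx : 1 ≤ x ∧ x ≤ 2 ^ (n + 3)) : x ∈ ρ :=
    (mem_of_mem_vRows hρ x).2 hx
  rw [prefCount, ← countP_eq_length_filter]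
  simp only [vRows, countP_cons, countP_nil, decide_eq_true_eq,
    idxOf_lt_idxOf_iff_of_pairwise h₁ (mem (by simp [vRows]) hi) (mem (by simp [vRows]) hj),
    idxOf_lt_idxOf_iff_of_pairwise h₂ (mem (by simp [vRows]) hi) (mem (by simp [vRows]) hj),
    idxOf_lt_idxOf_iff_of_pairwise h₃ (mem (by simp [vRows]) hi) (mem (by simp [vRows]) hj),
    idxOf_lt_idxOf_iff_of_pairwise h₄ (mem (by simp [vRows]) hi) (mem (by simp [vRows]) hj)]
  omega

/- Restricted to one half, `v₂` and `v₄` list the candidates in the reverse order of `v₁`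
and `v₃`. -/
theorem two_le_prefCount_vRows {n i j : ℕ} (hi : 1 ≤ i ∧ i ≤ 2 ^ (n + 3))
    (hj : 1 ≤ j ∧ j ≤ 2 ^ (n + 3)) (hij : i ≠ j)
    (hhalf : i ≤ 2 ^ (n + 2) ↔ j ≤ 2 ^ (n + 2)) :
    2 ≤ prefCount (vRows n) i j := by
  have h₃ : 2 ^ (n + 3) = 2 * 2 ^ (n + 2) := by ring
  rw [prefCount_vRows hi hj]
  simp only [rowKey, candClass, Bool.false_eq_true, ↓reduceIte]
  split_ifs <;> omega

theorem three_le_prefCount_vRows {n i j : ℕ} (hi : 1 ≤ i ∧ i ≤ 2 ^ (n + 3))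
    (hj : 1 ≤ j ∧ j ≤ 2 ^ (n + 3))
    (hcross : i ≤ 2 ^ (n + 2) ∧ 2 ^ (n + 2) < j ∧ (i + j) % 2 = 0 ∨
      2 ^ (n + 2) < i ∧ j ≤ 2 ^ (n + 2) ∧ (i + j) % 2 = 1) :
    3 ≤ prefCount (vRows n) i j := by
  have h₃ : 2 ^ (n + 3) = 2 * 2 ^ (n + 2) := by ring
  rw [prefCount_vRows hi hj]
  simp only [rowKey, candClass, Bool.false_eq_true, ↓reduceIte]
  split_ifs <;> omega

end FirstRows

section Bowtie

theorem bowtie_map_self (P : List (List ℕ)) (g : List ℕ → List ℕ) :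
    bowtie P (P.map g) =
      P.zipIdx.map fun p => if p.2 % 2 = 0 then p.1 ++ g p.1 else g p.1 ++ p.1 := by
  have hzip : P.zip (P.map g) = P.map fun ρ => (ρ, g ρ) := by
    simpa using zip_map' (f := id) (g := g) (l := P)
  rw [bowtie, hzip, zipIdx_map, map_map]
  rfl

variable {h i j : ℕ} {P : List (List ℕ)}

theorem prefCount_bowtie_shift :
    prefCount (bowtie P (P.map (·.map (· + h)))) i j = P.zipIdx.countP fun p =>
      (if p.2 % 2 = 0 then p.1 ++ p.1.map (· + h) else p.1.map (· + h) ++ p.1).idxOf i <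
      (if p.2 % 2 = 0 then p.1 ++ p.1.map (· + h) else p.1.map (· + h) ++ p.1).idxOf j := by
  rw [bowtie_map_self, prefCount_map]

theorem mem_map_add_iff_of_forall_mem_iff {ρ : List ℕ}
    (hρ : ∀ x, x ∈ ρ ↔ 1 ≤ x ∧ x ≤ h) (x : ℕ) :
    x ∈ ρ.map (· + h) ↔ h < x ∧ x ≤ 2 * h := by
  rw [mem_map_add_right_iff, hρ]
  omega

theorem idxOf_map_add_right (ρ : List ℕ) {x : ℕ} (hx : h ≤ x) :
    (ρ.map (· + h)).idxOf x = ρ.idxOf (x - h) := by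
  conv_lhs => rw [show x = x - h + h by omega]
  exact idxOf_map_of_injective (add_left_injective h) ρ (x - h)

theorem prefCount_bowtie_of_le (hP : ∀ ρ ∈ P, ∀ x, x ∈ ρ ↔ 1 ≤ x ∧ x ≤ h)
    (hi : 1 ≤ i ∧ i ≤ h) (hj : 1 ≤ j ∧ j ≤ h) :
    prefCount (bowtie P (P.map (·.map (· + h)))) i j = prefCount P i j := by
  rw [prefCount_bowtie_shift, prefCount, ← countP_eq_length_filter]
  refine (countP_congr fun p hp => ?_).trans (countP_zipIdx_fst P _)
  have hρ := hP p.1 (fst_mem_of_mem_zipIdx hp)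
  have hi₁ : i ∈ p.1 := (hρ i).2 hi
  have hj₁ : j ∈ p.1 := (hρ j).2 hj
  have hi₂ : i ∉ p.1.map (· + h) := by rw [mem_map_add_iff_of_forall_mem_iff hρ]; omega
  have hj₂ : j ∉ p.1.map (· + h) := by rw [mem_map_add_iff_of_forall_mem_iff hρ]; omega
  split_ifs <;> simp only [decide_eq_true_eq, idxOf_append_lt_idxOf_append_iff_of_mem hi₁ hj₁,
    idxOf_append_lt_idxOf_append_iff_of_notMem hi₂ hj₂]

theorem prefCount_bowtie_of_lt (hP : ∀ ρ ∈ P, ∀ x, x ∈ ρ ↔ 1 ≤ x ∧ x ≤ h)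
    (hi : h < i ∧ i ≤ 2 * h) (hj : h < j ∧ j ≤ 2 * h) :
    prefCount (bowtie P (P.map (·.map (· + h)))) i j = prefCount P (i - h) (j - h) := by
  rw [prefCount_bowtie_shift, prefCount, ← countP_eq_length_filter]
  refine (countP_congr fun p hp => ?_).trans (countP_zipIdx_fst P _)
  have hρ := hP p.1 (fst_mem_of_mem_zipIdx hp)
  have hi₁ : i ∉ p.1 := by rw [hρ]; omega
  have hj₁ : j ∉ p.1 := by rw [hρ]; omega
  have hi₂ : i ∈ p.1.map (· + h) := by rw [mem_map_add_iff_of_forall_mem_iff hρ]; omega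
  have hj₂ : j ∈ p.1.map (· + h) := by rw [mem_map_add_iff_of_forall_mem_iff hρ]; omega
  split_ifs <;> simp only [decide_eq_true_eq, idxOf_append_lt_idxOf_append_iff_of_mem hi₂ hj₂,
    idxOf_append_lt_idxOf_append_iff_of_notMem hi₁ hj₁, idxOf_map_add_right _ hi.1.le,
    idxOf_map_add_right _ hj.1.le]

theorem prefCount_bowtie_of_le_of_lt (hP : ∀ ρ ∈ P, ∀ x, x ∈ ρ ↔ 1 ≤ x ∧ x ≤ h)
    (hi : 1 ≤ i ∧ i ≤ h) (hj : h < j ∧ j ≤ 2 * h) :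
    prefCount (bowtie P (P.map (·.map (· + h)))) i j = (P.length + 1) / 2 := by
  rw [prefCount_bowtie_shift, ← countP_range_mod_two_eq_zero, ← countP_zipIdx_snd]
  refine countP_congr fun p hp => ?_
  have hρ := hP p.1 (fst_mem_of_mem_zipIdx hp)
  have hi₁ : i ∈ p.1 := (hρ i).2 hi
  have hj₁ : j ∉ p.1 := by rw [hρ]; omega
  have hi₂ : i ∉ p.1.map (· + h) := by rw [mem_map_add_iff_of_forall_mem_iff hρ]; omega
  have hj₂ : j ∈ p.1.map (· + h) := by rw [mem_map_add_iff_of_forall_mem_iff hρ]; omega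
  have hlow := idxOf_append_lt_idxOf_append (l₂ := p.1.map (· + h)) hi₁ hj₁
  have hhigh := idxOf_append_lt_idxOf_append (l₂ := p.1) hj₂ hi₂
  split_ifs <;> simp only [decide_eq_true_eq] <;> omega

theorem prefCount_bowtie_of_lt_of_le (hP : ∀ ρ ∈ P, ∀ x, x ∈ ρ ↔ 1 ≤ x ∧ x ≤ h)
    (hi : h < i ∧ i ≤ 2 * h) (hj : 1 ≤ j ∧ j ≤ h) :
    prefCount (bowtie P (P.map (·.map (· + h)))) i j = P.length / 2 := by
  rw [prefCount_bowtie_shift, ← countP_range_mod_two_eq_one, ← countP_zipIdx_snd]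
  refine countP_congr fun p hp => ?_
  have hρ := hP p.1 (fst_mem_of_mem_zipIdx hp)
  have hi₁ : i ∉ p.1 := by rw [hρ]; omega
  have hj₁ : j ∈ p.1 := (hρ j).2 hj
  have hi₂ : i ∈ p.1.map (· + h) := by rw [mem_map_add_iff_of_forall_mem_iff hρ]; omega
  have hj₂ : j ∉ p.1.map (· + h) := by rw [mem_map_add_iff_of_forall_mem_iff hρ]; omega
  have hlow := idxOf_append_lt_idxOf_append (l₂ := p.1.map (· + h)) hj₁ hi₁
  have hhigh := idxOf_append_lt_idxOf_append (l₂ := p.1) hi₂ hj₂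
  split_ifs <;> simp only [decide_eq_true_eq] <;> omega

end Bowtie

theorem Rprofile_succ (n : ℕ) :
    Rprofile (n + 1) =
      vRows (n + 1) ++ bowtie (Rprofile n) ((Rprofile n).map (·.map (· + 2 ^ (n + 3)))) :=
  rfl

theorem length_Rprofile (n : ℕ) : (Rprofile n).length = 4 * n + 10 := by
  induction n with
  | zero => rfl
  | succ n ih =>
    rw [Rprofile_succ, bowtie_map_self, length_append, length_map, length_zipIdx, ih]
    simp only [vRows, length_cons, length_nil]
    omega

theorem mem_of_mem_Rprofile {n : ℕ} {ρ : List ℕ} (hρ : ρ ∈ Rprofile n) (x : ℕ) :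
    x ∈ ρ ↔ 1 ≤ x ∧ x ≤ 2 ^ (n + 3) := by
  induction n generalizing ρ x with
  | zero =>
    have hperm : ∀ ρ ∈ R0, ρ.Perm (range' 1 8) := by decide
    rw [(hperm ρ hρ).mem_iff, mem_range'_1]
    omega
  | succ n ih =>
    rw [Rprofile_succ, mem_append] at hρ
    rcases hρ with hρ | hρ
    · exact mem_of_mem_vRows hρ x
    rw [bowtie_map_self, mem_map] at hρ
    obtain ⟨p, hp, rfl⟩ := hρ
    have hp₁ := ih (fst_mem_of_mem_zipIdx hp)
    have hpow : 2 ^ (n + 1 + 3) = 2 * 2 ^ (n + 3) := by ring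
    split_ifs <;>
    · rw [mem_append, hp₁, mem_map_add_iff_of_forall_mem_iff hp₁]
      omega

/-- For every `n` and distinct `i, j ∈ {1,…,2^(n+3)}` with `i ▷ j` in `η_n`, at least
`2n+6` of the `4n+10` rows of `R_n` rank `i` before `j` (winning margin at least 2). -/
theorem stmt14 (n : ℕ) :
    ∀ i ∈ List.range' 1 (2^(n+3)), ∀ j ∈ List.range' 1 (2^(n+3)), i ≠ j →
      eta n i j = true → 2*n + 6 ≤ prefCount (Rprofile n) i j := by
  induction n with
  | zero => decide
  | succ n ih =>
    intro i hi j hj hij hη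
    rw [mem_range'_1] at hi hj
    have hpow : 2 ^ (n + 1 + 3) = 2 * 2 ^ (n + 3) := by ring
    have hhalf : 2 ^ (n + 1 + 2) = 2 ^ (n + 3) := rfl
    have hrows := fun ρ (hρ : ρ ∈ Rprofile n) => mem_of_mem_Rprofile hρ
    have hlen := length_Rprofile n
    rw [Rprofile_succ, prefCount_append]
    rw [eta] at hη
    split_ifs at hη with hlow hhigh hi'
    · have hv := two_le_prefCount_vRows (n := n + 1) (i := i) (j := j) (by omega) (by omega) hij
        (by omega)
      have hR := ih i (by simp; omega) j (by simp; omega) hij hη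
      rw [prefCount_bowtie_of_le hrows (by omega) (by omega)]
      omega
    · have hv := two_le_prefCount_vRows (n := n + 1) (i := i) (j := j) (by omega) (by omega) hij
        (by omega)
      have hR := ih (i - 2 ^ (n + 3)) (by simp; omega) (j - 2 ^ (n + 3)) (by simp; omega)
        (by omega) hη
      rw [prefCount_bowtie_of_lt hrows (by omega) (by omega)]
      omega
    · rw [decide_eq_true_eq] at hη
      have hv := three_le_prefCount_vRows (n := n + 1) (i := i) (j := j) (by omega) (by omega)
        (by omega)
      rw [prefCount_bowtie_of_le_of_lt hrows (by omega) (by omega)]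
      omega
    · rw [decide_eq_true_eq] at hη
      have hv := three_le_prefCount_vRows (n := n + 1) (i := i) (j := j) (by omega) (by omega)
        (by omega)
      rw [prefCount_bowtie_of_lt_of_le hrows (by omega) (by omega)]
      omega
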